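/- arXiv:1602.00958 — 7 statements merged into one kernel-verified Lean document; each statement's English description precedes it below -/
import Mathlib

section
/- Let a, b be selfadjoint elements of a unital C*-algebra satisfying t(1−t) applied to a equals t(1−t) applied to b, and t²(1−t) applied to a equals t²(1−t) applied to b (i.e., a−a² = b−b² and a²−a³ = b²−b³). Then the 2×2 matrix P'' = [[1 + (1−a)(a−b)(1−a), (1−a)(b−a)a],[a(b−a)(1−a), a(a−b)a]] is a projection: (P'')² = P'' and (P'')* = P''. -/
open Matrix

theorem stmt_1 {A : Type*} [CStarAlgebra A] (a b : A)
    (ha : IsSelfAdjoint a) (hb : IsSelfAdjoint b)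
    (h1 : a - a ^ 2 = b - b ^ 2) (h2 : a ^ 2 - a ^ 3 = b ^ 2 - b ^ 3)
    (P : Matrix (Fin 2) (Fin 2) A)
    (hP : P = !![1 + (1 - a) * (a - b) * (1 - a), (1 - a) * (b - a) * a;
                 a * (b - a) * (1 - a), a * (a - b) * a]) :
    P * P = P ∧ Pᴴ = P := by
  have k1 : (a - a ^ 2) * (a - b) = 0 := by
    have e1 : (a - a ^ 2) * (a - b) = (a ^ 2 - a ^ 3) - (a - a ^ 2) * b := by noncomm_ring
    rw [e1, h1, h2]; noncomm_ring
  have k2 : (a - b) * (a - a ^ 2) = 0 := by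
    have e1 : a * (a - a ^ 2) = a ^ 2 - a ^ 3 := by noncomm_ring
    have e2 : b * (b - b ^ 2) = b ^ 2 - b ^ 3 := by noncomm_ring
    calc (a - b) * (a - a ^ 2) = a * (a - a ^ 2) - b * (a - a ^ 2) := by noncomm_ring
      _ = (a ^ 2 - a ^ 3) - b * (b - b ^ 2) := by rw [e1, h1]
      _ = (b ^ 2 - b ^ 3) - (b ^ 2 - b ^ 3) := by rw [h2, e2]
      _ = 0 := by noncomm_ring
  have k3 : (a - b) + (a - b) * (a - b) - a * (a - b) - (a - b) * a = 0 := by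
    have e1 : (a - b) + (a - b) * (a - b) - a * (a - b) - (a - b) * a
        = (a - a ^ 2) - (b - b ^ 2) := by noncomm_ring
    rw [e1, h1]; noncomm_ring
  constructor
  · subst hP
    ext i j
    fin_cases i <;> fin_cases j <;>
      simp [Matrix.mul_apply, Fin.sum_univ_two]
    · have key : (1 + (1 - a) * (a - b) * (1 - a)) * (1 + (1 - a) * (a - b) * (1 - a))
          + (1 - a) * (b - a) * a * (a * (b - a) * (1 - a))
          = (1 + (1 - a) * (a - b) * (1 - a))
            + (((a - a ^ 2) * (a - b)) * (1 - a)
              + (1 - a) * ((a - b) * (a - a ^ 2))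
              + (1 - a) * ((a - b) + (a - b) * (a - b) - a * (a - b) - (a - b) * a) * (1 - a)
              - 2 * ((1 - a) * ((a - b) * (a - a ^ 2)) * (a - b) * (1 - a))) := by
        noncomm_ring
      rw [key, k1, k2, k3]; noncomm_ring
    · have key : (1 + (1 - a) * (a - b) * (1 - a)) * ((1 - a) * (b - a) * a)
          + (1 - a) * (b - a) * a * (a * (a - b) * a)
          = (1 - a) * (b - a) * a
            - (((a - a ^ 2) * (a - b)) * a
              - (1 - a) * ((a - b) * (a - a ^ 2))
              + (1 - a) * ((a - b) + (a - b) * (a - b) - a * (a - b) - (a - b) * a) * a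
              - 2 * ((1 - a) * ((a - b) * (a - a ^ 2)) * (a - b) * a)) := by
        noncomm_ring
      rw [key, k1, k2, k3]; noncomm_ring
    · have key : a * (b - a) * (1 - a) * (1 + (1 - a) * (a - b) * (1 - a))
          + a * (a - b) * a * (a * (b - a) * (1 - a))
          = a * (b - a) * (1 - a)
            - (a * ((a - b) * (a - a ^ 2))
              - ((a - a ^ 2) * (a - b)) * (1 - a)
              + a * ((a - b) + (a - b) * (a - b) - a * (a - b) - (a - b) * a) * (1 - a)
              - 2 * (a * (a - b) * ((a - a ^ 2) * (a - b)) * (1 - a))) := by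
        noncomm_ring
      rw [key, k1, k2, k3]; noncomm_ring
    · have key : a * (b - a) * (1 - a) * ((1 - a) * (b - a) * a)
          + a * (a - b) * a * (a * (a - b) * a)
          = a * (a - b) * a
            + (-(((a - a ^ 2) * (a - b)) * a)
              - a * ((a - b) * (a - a ^ 2))
              + a * ((a - b) + (a - b) * (a - b) - a * (a - b) - (a - b) * a) * a
              - 2 * (a * ((a - b) * (a - a ^ 2)) * (a - b) * a)) := by
        noncomm_ring
      rw [key, k1, k2, k3]; noncomm_ring
  · subst hP
    ext i j
    fin_cases i <;> fin_cases j <;>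
      simp [Matrix.conjTranspose_apply, ha.star_eq, hb.star_eq, star_sub, StarMul.star_mul,
        star_one, mul_assoc]
end

section
/- Let a, b be selfadjoint elements of a unital C*-algebra with 0 ≤ a ≤ 1 and 0 ≤ b ≤ 1, satisfying (a² − a)(a − b) = 0 and (b² − b)(a − b) = 0. Then the 2×2 matrix P = [[1−b, g(a)],[g(a), a]], where g(a) = (a − a²)^{1/2} is defined by continuous functional calculus, is a projection. -/
open Matrix
open scoped Pointwise

lemma aux_sq_zero {A : Type*} [CStarAlgebra A] (x : A) (hx : IsSelfAdjoint x)
    (h : x * x = 0) : x = 0 := by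
  have := CStarRing.star_mul_self_eq_zero_iff x
  rw [hx.star_eq] at this
  exact this.mp h

lemma aux_cube_zero {A : Type*} [CStarAlgebra A] (x : A) (hx : IsSelfAdjoint x)
    (h : x * x * x = 0) : x = 0 := by
  have h4 : (x * x) * (x * x) = 0 := by
    calc (x * x) * (x * x) = (x * x * x) * x := by noncomm_ring
    _ = 0 := by rw [h, zero_mul]
  have hxxsa : _root_.IsSelfAdjoint (x * x) := by
    rw [show x * x = x ^ 2 from (sq x).symm]
    exact hx.pow 2
  have hxx : x * x = 0 := aux_sq_zero _ hxxsa h4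
  exact aux_sq_zero x hx hxx

theorem stmt_3 {A : Type*} [CStarAlgebra A] [PartialOrder A] [StarOrderedRing A]
    (a b : A) (ha : IsSelfAdjoint a) (hb : IsSelfAdjoint b)
    (ha0 : 0 ≤ a) (ha1 : a ≤ 1) (hb0 : 0 ≤ b) (hb1 : b ≤ 1)
    (h1 : (a ^ 2 - a) * (a - b) = 0) (h2 : (b ^ 2 - b) * (a - b) = 0)
    (P : Matrix (Fin 2) (Fin 2) A)
    (hP : P = !![1 - b, CFC.sqrt (a - a ^ 2); CFC.sqrt (a - a ^ 2), a]) :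
    P * P = P ∧ Pᴴ = P := by
  -- spectrum of `a` lies in `[0,1]`
  have hspec : ∀ t ∈ spectrum ℝ a, 0 ≤ t ∧ t ≤ 1 := by
    intro t ht
    refine ⟨?_, ?_⟩
    · exact (StarOrderedRing.nonneg_iff_spectrum_nonneg a).mp ha0 t ht
    · have h1a : (0 : A) ≤ 1 - a := sub_nonneg.mpr ha1
      have hmem : (1 : ℝ) - t ∈ spectrum ℝ ((1 : A) - a) := by
        have : (1 : ℝ) - t ∈ {(1 : ℝ)} - spectrum ℝ a :=
          Set.sub_mem_sub rfl ht
        rwa [spectrum.singleton_sub_eq, _root_.map_one] at this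
      have := (StarOrderedRing.nonneg_iff_spectrum_nonneg (R := ℝ) _).mp h1a _ hmem
      linarith
  -- express sqrt (a - a²) as cfc of a
  set f : ℝ → ℝ := fun t => Real.sqrt (t - t ^ 2) with hf
  set g : A := cfc f a with hgdef
  have hg0 : 0 ≤ g := cfc_nonneg fun t _ => Real.sqrt_nonneg _
  have hgsa : IsSelfAdjoint g := IsSelfAdjoint.of_nonneg hg0
  have hcfc_sub : cfc (fun t : ℝ => t - t ^ 2) a = a - a ^ 2 := by
    rw [cfc_sub _ _ a (by fun_prop) (by fun_prop), cfc_pow_id a 2, cfc_id' ℝ a]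
  have hgg : g * g = a - a ^ 2 := by
    rw [hgdef, ← cfc_mul f f a (by fun_prop) (by fun_prop)]
    rw [← hcfc_sub]
    apply cfc_congr
    intro t ht
    simp only [hf]
    obtain ⟨h0t, ht1⟩ := hspec t ht
    exact Real.mul_self_sqrt (by nlinarith)
  have hc0 : 0 ≤ a - a ^ 2 := by
    rw [← hgg]
    nth_rewrite 1 [← hgsa.star_eq]
    exact star_mul_self_nonneg g
  have hgsqrt : CFC.sqrt (a - a ^ 2) = g := CFC.sqrt_unique hgg hg0
  have hcomm : g * a = a * g := by
    have := cfc_commute_cfc f (id : ℝ → ℝ) a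
    rwa [cfc_id ℝ a] at this
  -- key relation : a - a² = b - b²
  have hx : a - a ^ 2 = b - b ^ 2 := by
    set x : A := (a - a ^ 2) - (b - b ^ 2) with hxdef
    have hxsa : IsSelfAdjoint x :=
      ((ha.sub (ha.pow 2)).sub (hb.sub (hb.pow 2)))
    have hab_sa' : IsSelfAdjoint (a - b) := ha.sub hb
    have hxab : x * (a - b) = 0 := by
      have : x = -(a ^ 2 - a) + (b ^ 2 - b) := by rw [hxdef]; abel
      rw [this, add_mul, neg_mul, h1, h2, neg_zero, zero_add]
    have habx : (a - b) * x = 0 := by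
      simpa [hxsa.star_eq, hab_sa'.star_eq] using congrArg star hxab
    have hxrw : x = (a - b) - a * (a - b) - (a - b) * b := by rw [hxdef]; noncomm_ring
    have hx2 : x * x = -(x * (a * (a - b))) := by
      calc x * x = x * ((a - b) - a * (a - b) - (a - b) * b) := by rw [← hxrw]
      _ = x * (a - b) - x * (a * (a - b)) - x * (a - b) * b := by noncomm_ring
      _ = -(x * (a * (a - b))) := by rw [hxab]; noncomm_ring
    have hx3 : x * x * x = 0 := by
      rw [hx2]
      calc -(x * (a * (a - b))) * x = -(x * a * ((a - b) * x)) := by noncomm_ring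
      _ = 0 := by rw [habx]; noncomm_ring
    have := aux_cube_zero x hxsa hx3
    rw [hxdef] at this
    linear_combination (norm := noncomm_ring) this
  -- g annihilates a - b
  have hab_sa : IsSelfAdjoint (a - b) := ha.sub hb
  have hgab : g * (a - b) = 0 := by
    have hcab : (a - a ^ 2) * (a - b) = 0 := by
      have : a - a ^ 2 = -(a ^ 2 - a) := (neg_sub _ _).symm
      rw [this, neg_mul, h1, neg_zero]
    have hstar : star (g * (a - b)) = (a - b) * g := by
      simp [hgsa.star_eq, hab_sa.star_eq]
    have : star (g * (a - b)) * (g * (a - b)) = 0 := by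
      rw [hstar]
      calc (a - b) * g * (g * (a - b)) = (a - b) * ((g * g) * (a - b)) := by noncomm_ring
      _ = 0 := by rw [hgg, hcab, mul_zero]
    exact (CStarRing.star_mul_self_eq_zero_iff _).mp this
  have habg : (a - b) * g = 0 := by
    simpa [hgsa.star_eq, hab_sa.star_eq] using congrArg star hgab
  have hag : a * g = b * g := by
    have : (a - b) * g = a * g - b * g := by noncomm_ring
    rw [this] at habg; exact sub_eq_zero.mp habg
  have hga : g * a = g * b := by
    have : g * (a - b) = g * a - g * b := by noncomm_ring
    rw [this] at hgab
    have := sub_eq_zero.mp hgab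
    exact this
  constructor
  · subst hP
    rw [hgsqrt]
    ext i j
    fin_cases i <;> fin_cases j <;>
      simp [Matrix.mul_apply, Fin.sum_univ_two]
    · -- (0,0): (1-b)*(1-b) + g*g = 1-b
      rw [hgg, hx]; noncomm_ring
    · -- (0,1): (1-b)*g + g*a = g
      rw [hcomm, hag]; noncomm_ring
    · -- (1,0): g*(1-b) + a*g = g
      rw [← hcomm, hga]; noncomm_ring
    · -- (1,1): g*g + a*a = a
      rw [hgg]; noncomm_ring
  · subst hP
    rw [hgsqrt]
    ext i j
    fin_cases i <;> fin_cases j <;>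
      simp [Matrix.conjTranspose_apply, hgsa.star_eq, ha.star_eq, hb.star_eq]
end

section
/- Let a, b be selfadjoint elements of a unital C*-algebra satisfying a − a² = b − b² and a² − a³ = b² − b³, and let h: ℝ → ℝ be the cutting function h(t) = 0 for t < 0, h(t) = t for 0 ≤ t ≤ 1, h(t) = 1 for t > 1. Then h(a) and h(b) (defined by continuous functional calculus) satisfy the same relations: h(a) − h(a)² = h(b) − h(b)² and h(a)² − h(a)³ = h(b)² − h(b)³. -/
private lemma key1 (t : ℝ) :
    min (max t 0) 1 - (min (max t 0) 1) ^ 2 = max (t - t ^ 2) 0 := by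
  rcases le_total t 0 with h0 | h0
  · rw [max_eq_right h0, min_eq_left (by norm_num), max_eq_right (by nlinarith)]
    ring
  · rw [max_eq_left h0]
    rcases le_total t 1 with h1 | h1
    · rw [min_eq_left h1, max_eq_left (by nlinarith)]
    · rw [min_eq_right h1, max_eq_right (by nlinarith)]
      ring

private lemma key2 (t : ℝ) :
    (min (max t 0) 1) ^ 2 - (min (max t 0) 1) ^ 3 =
      max (t ^ 2 - t ^ 3) 0 - max (max (t ^ 2 - t ^ 3) 0 - max (t - t ^ 2) 0) 0 := by
  rcases le_total t 0 with h0 | h0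
  · have hq : max (t ^ 2 - t ^ 3) 0 = t ^ 2 - t ^ 3 := max_eq_left (by nlinarith)
    have hp : max (t - t ^ 2) 0 = 0 := max_eq_right (by nlinarith)
    rw [hp, hq, max_eq_right h0, min_eq_left zero_le_one, sub_zero,
      max_eq_left (by nlinarith : (0:ℝ) ≤ t ^ 2 - t ^ 3)]
    ring
  · rcases le_total t 1 with h1 | h1
    · have hq : max (t ^ 2 - t ^ 3) 0 = t ^ 2 - t ^ 3 := max_eq_left (by nlinarith)
      have hp : max (t - t ^ 2) 0 = t - t ^ 2 := max_eq_left (by nlinarith)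
      rw [hq, hp, max_eq_right (by nlinarith [mul_nonneg h0 (sq_nonneg (t-1))] : t ^ 2 - t ^ 3 - (t - t ^ 2) ≤ 0),
        max_eq_left h0, min_eq_left h1]
      ring
    · have hq : max (t ^ 2 - t ^ 3) 0 = 0 := max_eq_right (by nlinarith)
      have hp : max (t - t ^ 2) 0 = 0 := max_eq_right (by nlinarith)
      rw [hq, hp, max_eq_left h0, min_eq_right h1]
      norm_num

private lemma cfc_p {A : Type*} [CStarAlgebra A] (x : A) (hx : IsSelfAdjoint x) :
    cfc (fun t : ℝ => t - t ^ 2) x = x - x ^ 2 := by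
  rw [cfc_sub _ _ x (by fun_prop) (by fun_prop), cfc_id' ℝ x,
    cfc_pow_id x 2]

private lemma cfc_q {A : Type*} [CStarAlgebra A] (x : A) (hx : IsSelfAdjoint x) :
    cfc (fun t : ℝ => t ^ 2 - t ^ 3) x = x ^ 2 - x ^ 3 := by
  rw [cfc_sub _ _ x (by fun_prop) (by fun_prop), cfc_pow_id x 2, cfc_pow_id x 3]

private lemma lem1 {A : Type*} [CStarAlgebra A] (x : A) (hx : IsSelfAdjoint x) :
    cfc (fun t : ℝ => min (max t 0) 1) x - (cfc (fun t : ℝ => min (max t 0) 1) x) ^ 2 =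
      cfc (fun s : ℝ => max s 0) (x - x ^ 2) := by
  rw [← cfc_pow (fun t : ℝ => min (max t 0) 1) 2 x (by fun_prop),
    ← cfc_sub _ _ x (by fun_prop) (by fun_prop)]
  have : (fun t : ℝ => min (max t 0) 1 - (min (max t 0) 1) ^ 2) =
      (fun s : ℝ => max s 0) ∘ (fun t : ℝ => t - t ^ 2) := by
    funext t; exact key1 t
  rw [this, cfc_comp _ _ x hx (by fun_prop) (by fun_prop), cfc_p x hx]

private lemma lem2 {A : Type*} [CStarAlgebra A] (x : A) (hx : IsSelfAdjoint x) :
    (cfc (fun t : ℝ => min (max t 0) 1) x) ^ 2 - (cfc (fun t : ℝ => min (max t 0) 1) x) ^ 3 =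
      cfc (fun s : ℝ => max s 0) (x ^ 2 - x ^ 3) -
        cfc (fun s : ℝ => max s 0)
          (cfc (fun s : ℝ => max s 0) (x ^ 2 - x ^ 3) -
            cfc (fun s : ℝ => max s 0) (x - x ^ 2)) := by
  have hq : cfc (fun t : ℝ => max (t ^ 2 - t ^ 3) 0) x =
      cfc (fun s : ℝ => max s 0) (x ^ 2 - x ^ 3) := by
    have h' := cfc_comp (fun s : ℝ => max s 0) (fun t : ℝ => t ^ 2 - t ^ 3) x hx
      (by fun_prop) (by fun_prop)
    rw [cfc_q x hx] at h'
    exact h'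
  have hp : cfc (fun t : ℝ => max (t - t ^ 2) 0) x =
      cfc (fun s : ℝ => max s 0) (x - x ^ 2) := by
    have h' := cfc_comp (fun s : ℝ => max s 0) (fun t : ℝ => t - t ^ 2) x hx
      (by fun_prop) (by fun_prop)
    rw [cfc_p x hx] at h'
    exact h'
  have hmid : cfc (fun t : ℝ =>
      max (max (t ^ 2 - t ^ 3) 0 - max (t - t ^ 2) 0) 0) x =
      cfc (fun s : ℝ => max s 0)
        (cfc (fun s : ℝ => max s 0) (x ^ 2 - x ^ 3) -
          cfc (fun s : ℝ => max s 0) (x - x ^ 2)) := by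
    have h' := cfc_comp (fun s : ℝ => max s 0)
      (fun t : ℝ => max (t ^ 2 - t ^ 3) 0 - max (t - t ^ 2) 0) x hx
      (by fun_prop) (by fun_prop)
    rw [cfc_sub _ _ x (by fun_prop) (by fun_prop), hq, hp] at h'
    exact h'
  rw [← hmid, ← hq,
    ← cfc_sub _ _ x (by fun_prop) (by fun_prop),
    ← cfc_pow (fun t : ℝ => min (max t 0) 1) 2 x (by fun_prop),
    ← cfc_pow (fun t : ℝ => min (max t 0) 1) 3 x (by fun_prop),
    ← cfc_sub _ _ x (by fun_prop) (by fun_prop)]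
  exact cfc_congr fun t _ => key2 t

theorem stmt_5 {A : Type*} [CStarAlgebra A] (a b : A)
    (ha : IsSelfAdjoint a) (hb : IsSelfAdjoint b)
    (h1 : a - a ^ 2 = b - b ^ 2) (h2 : a ^ 2 - a ^ 3 = b ^ 2 - b ^ 3)
    (h : ℝ → ℝ) (hh : h = fun t => min (max t 0) 1) :
    cfc h a - (cfc h a) ^ 2 = cfc h b - (cfc h b) ^ 2 ∧
      (cfc h a) ^ 2 - (cfc h a) ^ 3 = (cfc h b) ^ 2 - (cfc h b) ^ 3 := by
  subst hh
  constructor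
  · rw [lem1 a ha, lem1 b hb, h1]
  · rw [lem2 a ha, lem2 b hb, h1, h2]
end

section
/- Let H be a Hilbert space with an increasing sequence of finite-dimensional subspaces Lₙ with dense union, Pₙ the orthogonal projection onto Lₙ. Let π⁺, π⁻ be unitary representations of a group Γ on H such that π⁺(g) − π⁻(g) is compact for every g ∈ Γ. Define πₙ^±(g) = Pₙ π^±(g) Pₙ restricted to Lₙ. Then for every finite set F ⊂ Γ and every ε > 0 there exists N such that for all n ≥ N and all g, h, γ ∈ F: ‖(πₙ^±(gh) − πₙ^±(g)πₙ^±(h))(πₙ⁺(γ) − πₙ⁻(γ))‖ < ε. -/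
/-!
For an idempotent `P` with `Q = 1 - P`, the multiplicativity defect of the compressions is
`P u v P - (P u P)(P v P) = P u Q v P`, and `Q v P k = Q (v k) - (Q v)(Q k)`. So for unitaries
`u, v` and `k = π⁺(γ) - π⁻(γ)` the product in question has norm at most `‖Q (v k)‖ + ‖Q k‖`,
where both `v k` and `k` are compact. Since `1 - Pₙ → 0` strongly with `‖1 - Pₙ‖ ≤ 1`,
equicontinuity makes the convergence uniform on the compact closure of the image of the unit
ball under a compact operator, so `‖(1 - Pₙ) C‖ → 0` for every compact `C`.
-/

open Filter Topology

theorem compression_mulDefect_mul {R : Type*} [Ring R] {p : R} (hp : IsIdempotentElem p)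
    (u v k k' : R) :
    (p * (u * v) * p - (p * u * p) * (p * v * p)) * (p * k * p - p * k' * p) =
      p * u * ((1 - p) * (v * (k - k')) - ((1 - p) * v) * ((1 - p) * (k - k'))) * p := by
  have hp' : p * p = p := hp
  calc _ = p * (u * v) * (p * p) * (k - k') * p - p * u * (p * p) * v * (p * p) * (k - k') * p :=
        by noncomm_ring
    _ = p * (u * v) * p * (k - k') * p - p * u * p * v * p * (k - k') * p := by rw [hp']
    _ = _ := by noncomm_ring

theorem norm_compression_mulDefect_mul_le {R : Type*} [NormedRing R] {p : R}
    (hp : IsIdempotentElem p) (hp1 : ‖p‖ ≤ 1) (hq1 : ‖1 - p‖ ≤ 1) {u v : R} (hu : ‖u‖ ≤ 1)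
    (hv : ‖v‖ ≤ 1) (k k' : R) :
    ‖(p * (u * v) * p - (p * u * p) * (p * v * p)) * (p * k * p - p * k' * p)‖ ≤
      ‖(1 - p) * (v * (k - k'))‖ + ‖(1 - p) * (k - k')‖ := by
  set q := 1 - p
  have hqv : ‖q * v‖ ≤ 1 := (norm_mul_le _ _).trans (mul_le_one₀ hq1 (norm_nonneg _) hv)
  have hpu : ‖p * u‖ ≤ 1 := (norm_mul_le _ _).trans (mul_le_one₀ hp1 (norm_nonneg _) hu)
  rw [compression_mulDefect_mul hp]
  set X := q * (v * (k - k')) - q * v * (q * (k - k'))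
  calc ‖p * u * X * p‖ ≤ ‖p * u * X‖ :=
        (norm_mul_le _ _).trans (mul_le_of_le_one_right (norm_nonneg _) hp1)
    _ ≤ ‖X‖ := (norm_mul_le _ _).trans (mul_le_of_le_one_left (norm_nonneg _) hpu)
    _ ≤ ‖q * (v * (k - k'))‖ + ‖q * v‖ * ‖q * (k - k')‖ :=
        (norm_sub_le _ _).trans (add_le_add_right (norm_mul_le _ _) _)
    _ ≤ _ := by gcongr; exact mul_le_of_le_one_left (norm_nonneg _) hqv

theorem CStarRing.norm_le_one_of_mem_unitary {E : Type*} [NormedRing E] [StarRing E] [CStarRing E]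
    {U : E} (hU : U ∈ unitary E) : ‖U‖ ≤ 1 := by
  rcases subsingleton_or_nontrivial E with _ | _
  · simp [Subsingleton.elim U 0]
  · exact (norm_of_mem_unitary hU).le

theorem ContinuousLinearMap.tendsto_norm_comp_of_isCompactOperator {𝕜 E F G ι : Type*} [RCLike 𝕜]
    [NormedAddCommGroup E] [NormedSpace 𝕜 E] [NormedAddCommGroup F] [NormedSpace 𝕜 F]
    [NormedAddCommGroup G] [NormedSpace 𝕜 G] {l : Filter ι} {T : ι → E →L[𝕜] F} {M : ℝ}
    (hT : ∀ i, ‖T i‖ ≤ M) (hT0 : ∀ x, Tendsto (fun i ↦ T i x) l (𝓝 0))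
    {C : G →L[𝕜] E} (hC : IsCompactOperator C) :
    Tendsto (fun i ↦ ‖(T i).comp C‖) l (𝓝 0) := by
  set K := closure (C '' Metric.closedBall 0 1)
  have hK : IsCompact K := hC.isCompact_closure_image_closedBall 1
  have hTeq : Equicontinuous fun i ↦ ⇑(T i) :=
    ((NormedSpace.equicontinuous_TFAE T).out 5 1).mp (⟨M, hT⟩ : ∃ M, ∀ i, ‖T i‖ ≤ M)
  have hunif : TendstoUniformlyOn (fun i ↦ ⇑(T i)) 0 l K := by
    have := (EquicontinuousOn.tendsto_uniformOnFun_iff_pi' (𝔖 := {K}) (by simpa using hK)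
      (by simpa using hTeq.equicontinuousOn K) l 0).mpr (tendsto_pi_nhds.mpr fun y ↦ hT0 y)
    exact UniformOnFun.tendsto_iff_tendstoUniformlyOn.mp this K rfl
  refine Metric.tendsto_nhds.mpr fun δ hδ ↦ ?_
  filter_upwards [Metric.tendstoUniformlyOn_iff.mp hunif (δ / 2) (half_pos hδ)] with i hi
  rw [dist_zero_right, norm_norm]
  refine lt_of_le_of_lt (opNorm_le_of_unit_norm (half_pos hδ).le fun x hx ↦ ?_) (half_lt_self hδ)
  simpa using (hi (C x) (subset_closure ⟨x, by simp [hx], rfl⟩)).le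

section Projection

variable {𝕜 E G ι : Type*} [RCLike 𝕜] [NormedAddCommGroup E] [InnerProductSpace 𝕜 E]

theorem Submodule.norm_one_sub_starProjection_le (K : Submodule 𝕜 E) [K.HasOrthogonalProjection] :
    ‖1 - K.starProjection‖ ≤ 1 := by
  rw [← starProjection_orthogonal']
  exact starProjection_norm_le _

theorem Submodule.tendsto_norm_one_sub_starProjection_comp [NormedAddCommGroup G]
    [NormedSpace 𝕜 G] [Preorder ι] (L : ι → Submodule 𝕜 E) [∀ i, (L i).HasOrthogonalProjection]
    (hmono : Monotone L) (hdense : Dense (⋃ i, (L i : Set E))) {C : G →L[𝕜] E}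
    (hC : IsCompactOperator C) :
    Tendsto (fun i ↦ ‖(1 - (L i).starProjection).comp C‖) atTop (𝓝 0) := by
  have htop : ⊤ ≤ (⨆ i, L i).topologicalClosure := by
    rw [top_le_iff, ← Submodule.dense_iff_topologicalClosure_eq_top]
    exact hdense.mono (Set.iUnion_subset fun i ↦ SetLike.coe_subset_coe.mpr (le_iSup L i))
  refine ContinuousLinearMap.tendsto_norm_comp_of_isCompactOperator
    (fun i ↦ (L i).norm_one_sub_starProjection_le) (fun x ↦ ?_) hC
  simpa using (starProjection_tendsto_self L hmono x htop).const_sub x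

end Projection

theorem stmt_6 {H : Type*} [NormedAddCommGroup H] [InnerProductSpace ℂ H] [CompleteSpace H]
    {Γ : Type*} [Group Γ]
    (L : ℕ → Submodule ℂ H) [∀ n, FiniteDimensional ℂ (L n)]
    (hmono : Monotone L) (hdense : Dense (⋃ n, (L n : Set H)))
    (P : ℕ → H →L[ℂ] H)
    (hP : ∀ n, P n = (L n).subtypeL.comp ((L n).orthogonalProjectionOnto))
    (πp πm : Γ → H →L[ℂ] H)
    (hpmul : ∀ g h, πp (g * h) = πp g * πp h) (hmmul : ∀ g h, πm (g * h) = πm g * πm h)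
    (hpu : ∀ g, πp g ∈ unitary (H →L[ℂ] H)) (hmu : ∀ g, πm g ∈ unitary (H →L[ℂ] H))
    (hcompact : ∀ g, IsCompactOperator ((πp g - πm g : H →L[ℂ] H) : H → H))
    (πpn πmn : ℕ → Γ → H →L[ℂ] H)
    (hπpn : ∀ n g, πpn n g = P n * πp g * P n) (hπmn : ∀ n g, πmn n g = P n * πm g * P n) :
    ∀ (F : Finset Γ), ∀ ε > 0, ∃ N, ∀ n ≥ N, ∀ g ∈ F, ∀ h ∈ F, ∀ γ ∈ F,
      ‖(πpn n (g * h) - πpn n g * πpn n h) * (πpn n γ - πmn n γ)‖ < ε ∧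
      ‖(πmn n (g * h) - πmn n g * πmn n h) * (πpn n γ - πmn n γ)‖ < ε := by
  intro F ε hε
  obtain rfl : P = fun n ↦ (L n).starProjection := funext hP
  have hsmall (C : H →L[ℂ] H) (hC : IsCompactOperator C) :
      ∀ᶠ n in atTop, ‖(1 - (L n).starProjection) * C‖ < ε / 2 :=
    (Submodule.tendsto_norm_one_sub_starProjection_comp L hmono hdense hC).eventually
      (gt_mem_nhds (half_pos hε))
  have hcomp (v : H →L[ℂ] H) (γ : Γ) : IsCompactOperator (v * (πp γ - πm γ)) :=
    (hcompact γ).clm_comp v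
  obtain ⟨N, hN⟩ := eventually_atTop.mp <| (eventually_all_finset F).mpr fun h _ ↦
    (eventually_all_finset F).mpr fun γ _ ↦ (hsmall _ (hcomp (πp h) γ)).and <|
      (hsmall _ (hcomp (πm h) γ)).and (hsmall _ (hcompact γ))
  refine ⟨N, fun n hn g _ h hh γ hγ ↦ ?_⟩
  obtain ⟨hpsmall, hmsmall, hksmall⟩ := hN n hn h hh γ hγ
  have hbound {u v : H →L[ℂ] H} (hu : ‖u‖ ≤ 1) (hv : ‖v‖ ≤ 1) :=
    norm_compression_mulDefect_mul_le (L n).isIdempotentElem_starProjection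
      (L n).starProjection_norm_le (L n).norm_one_sub_starProjection_le hu hv (πp γ) (πm γ)
  simp only [hπpn, hπmn, hpmul, hmmul]
  constructor
  · linarith [hbound (CStarRing.norm_le_one_of_mem_unitary (hpu g))
      (CStarRing.norm_le_one_of_mem_unitary (hpu h))]
  · linarith [hbound (CStarRing.norm_le_one_of_mem_unitary (hmu g))
      (CStarRing.norm_le_one_of_mem_unitary (hmu h))]
end

section
/- Let X be a compact space, {φ_i}_{i∈I} (I finite) continuous functions with 0 ≤ φ_i ≤ 1 and Σ_i φ_i² = 1, and γ = (γ_{ij}) a Γ-valued cocycle (γ_{ji} = γ_{ij}⁻¹, γ_{ij}γ_{jk} = γ_{ik} whenever the relevant supports intersect). Let π : Γ → U(n) be a unitary representation. Then for each x ∈ X the matrix A_π(x) = (φ_i(x)φ_j(x)π(γ_{ij}))_{i,j∈I} ∈ M_{|I|}(M_n(ℂ)) is a selfadjoint projection. -/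
/-! Writing `w i = φ i x`, the cocycle identity turns the `(i, j)` entry of `A * A` into
`∑ k, w i * w j * w k ^ 2 • π (γ i j)`; the terms it cannot be applied to vanish anyway, since
they carry the factor `w i * w k * w j = 0`. Summing `∑ k, w k ^ 2 = 1` gives `A * A = A`, and
`π (γ i j)⋆ = π (γ j i)` gives `Aᴴ = A`. -/

open Matrix

namespace Matrix

variable {I 𝕜 R Γ : Type*} [CommSemiring 𝕜] [Semiring R] [Algebra 𝕜 R] [Group Γ]

def cocycleProjection (w : I → 𝕜) (γ : I → I → Γ) (π : Γ → R) : Matrix I I R :=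
  fun i j => (w i * w j) • π (γ i j)

theorem cocycleProjection_apply_mul_apply {w : I → 𝕜} {γ : I → I → Γ} {π : Γ → R}
    (hγ : ∀ i j k, w i * w j * w k ≠ 0 → γ i j * γ j k = γ i k)
    (hπ : ∀ g h, π (g * h) = π g * π h) (i k j : I) :
    cocycleProjection w γ π i k * cocycleProjection w γ π k j
      = (w i * w j * w k ^ 2) • π (γ i j) := by
  rw [cocycleProjection, cocycleProjection, smul_mul_smul_comm,
    show w i * w k * (w k * w j) = w i * w k * w j * w k by ring,
    show w i * w j * w k ^ 2 = w i * w k * w j * w k by ring, ← hπ]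
  by_cases h : w i * w k * w j = 0
  · rw [h, zero_mul, zero_smul, zero_smul]
  · rw [hγ i k j h]

theorem cocycleProjection_mul_self [Fintype I] {w : I → 𝕜} {γ : I → I → Γ} {π : Γ → R}
    (hw : ∑ i, w i ^ 2 = 1)
    (hγ : ∀ i j k, w i * w j * w k ≠ 0 → γ i j * γ j k = γ i k)
    (hπ : ∀ g h, π (g * h) = π g * π h) :
    cocycleProjection w γ π * cocycleProjection w γ π = cocycleProjection w γ π := by
  ext i j
  rw [mul_apply]
  simp only [cocycleProjection_apply_mul_apply hγ hπ]
  rw [← Finset.sum_smul, ← Finset.mul_sum, hw, mul_one, cocycleProjection]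

theorem cocycleProjection_conjTranspose [StarRing 𝕜] [TrivialStar 𝕜] [StarRing R]
    [StarModule 𝕜 R] {w : I → 𝕜} {γ : I → I → Γ} {π : Γ → R}
    (hγ : ∀ i j, γ j i = (γ i j)⁻¹) (hπ : ∀ g, star (π g) = π g⁻¹) :
    (cocycleProjection w γ π)ᴴ = cocycleProjection w γ π := by
  ext i j
  rw [conjTranspose_apply, cocycleProjection, cocycleProjection, star_smul, hπ, hγ, inv_inv,
    star_trivial, mul_comm]

end Matrix

theorem stmt_11_general {X : Type*}
    {Γ : Type*} [Group Γ] {I : Type*} [Fintype I] {n : ℕ}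
    (φ : I → X → ℝ)
    (hφsum : ∀ x, ∑ i, (φ i x) ^ 2 = 1)
    (γ : I → I → Γ)
    (hγinv : ∀ i j, γ j i = (γ i j)⁻¹)
    (hγcoc : ∀ i j k, (∃ x, φ i x * φ j x * φ k x ≠ 0) → γ i j * γ j k = γ i k)
    (π : Γ → Matrix (Fin n) (Fin n) ℂ)
    (hπmul : ∀ g h, π (g * h) = π g * π h)
    (hπstar : ∀ g, (π g)ᴴ = π g⁻¹)
    (x : X) (A : Matrix I I (Matrix (Fin n) (Fin n) ℂ))
    (hA : A = fun i j => (φ i x * φ j x) • π (γ i j)) :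
    A * A = A ∧ Aᴴ = A := by
  have hA' : A = cocycleProjection (fun i => φ i x) γ π := hA
  subst hA'
  exact ⟨cocycleProjection_mul_self (hφsum x) (fun i j k h => hγcoc i j k ⟨x, h⟩) hπmul,
    cocycleProjection_conjTranspose hγinv hπstar⟩

theorem stmt_11 {X : Type*} [TopologicalSpace X] [CompactSpace X]
    {Γ : Type*} [Group Γ] {I : Type*} [Fintype I] [DecidableEq I] {n : ℕ}
    (φ : I → X → ℝ) (hφcont : ∀ i, Continuous (φ i))
    (hφ01 : ∀ i x, 0 ≤ φ i x ∧ φ i x ≤ 1)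
    (hφsum : ∀ x, ∑ i, (φ i x) ^ 2 = 1)
    (γ : I → I → Γ)
    (hγinv : ∀ i j, γ j i = (γ i j)⁻¹)
    (hγcoc : ∀ i j k, (∃ x, φ i x * φ j x * φ k x ≠ 0) → γ i j * γ j k = γ i k)
    (π : Γ → Matrix (Fin n) (Fin n) ℂ)
    (hπmul : ∀ g h, π (g * h) = π g * π h)
    (hπstar : ∀ g, (π g)ᴴ = π g⁻¹)
    (hπunitary : ∀ g, π g ∈ Matrix.unitaryGroup (Fin n) ℂ)
    (x : X) (A : Matrix I I (Matrix (Fin n) (Fin n) ℂ))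
    (hA : A = fun i j => (φ i x * φ j x) • π (γ i j)) :
    A * A = A ∧ Aᴴ = A :=
  stmt_11_general φ hφsum γ hγinv hγcoc π hπmul hπstar x A hA
end

section
/- Let a, b be selfadjoint elements of a unital C*-algebra with 0 ≤ a, b ≤ 1 satisfying (a²−a)(a−b) = 0 and (b²−b)(a−b) = 0. Then U* P U = P', where P = [[1−b, g(a)],[g(a), a]], g(a) = (a−a²)^{1/2}, U = [[(1−a)^{1/2}, −a^{1/2}],[a^{1/2}, (1−a)^{1/2}]], and P' = [[1 + (1−a)^{1/2}(a−b)(1−a)^{1/2}, (1−a)^{1/2}(b−a)a^{1/2}],[a^{1/2}(b−a)(1−a)^{1/2}, a^{1/2}(a−b)a^{1/2}]]. -/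
open Matrix
set_option maxHeartbeats 2000000 in

theorem stmt_13 {A : Type*} [CStarAlgebra A] [PartialOrder A] [StarOrderedRing A]
    (a b : A) (ha : IsSelfAdjoint a) (hb : IsSelfAdjoint b)
    (ha0 : 0 ≤ a) (ha1 : a ≤ 1) (hb0 : 0 ≤ b) (hb1 : b ≤ 1)
    (h1 : (a ^ 2 - a) * (a - b) = 0) (h2 : (b ^ 2 - b) * (a - b) = 0)
    (P U P' : Matrix (Fin 2) (Fin 2) A)
    (hP : P = !![1 - b, CFC.sqrt (a - a ^ 2); CFC.sqrt (a - a ^ 2), a])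
    (hU : U = !![CFC.sqrt (1 - a), -CFC.sqrt a; CFC.sqrt a, CFC.sqrt (1 - a)])
    (hP' : P' = !![1 + CFC.sqrt (1 - a) * (a - b) * CFC.sqrt (1 - a),
                   CFC.sqrt (1 - a) * (b - a) * CFC.sqrt a;
                   CFC.sqrt a * (b - a) * CFC.sqrt (1 - a),
                   CFC.sqrt a * (a - b) * CFC.sqrt a]) :
    Uᴴ * P * U = P' := by
  have hsp0 : ∀ x ∈ spectrum ℝ a, 0 ≤ x := fun x hx => spectrum_nonneg_of_nonneg ha0 hx
  have hsp1 : ∀ x ∈ spectrum ℝ a, x ≤ 1 := (CFC.le_one_iff a).mp ha1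
  -- sqrt functions
  have cmul : ∀ (F G : ℝ → ℝ), Continuous F → Continuous G →
      cfc F a * cfc G a = cfc (fun x => F x * G x) a := fun F G hF hG =>
    (cfc_mul F G a hF.continuousOn hG.continuousOn).symm
  have cadd : ∀ (F G : ℝ → ℝ), Continuous F → Continuous G →
      cfc F a + cfc G a = cfc (fun x => F x + G x) a := fun F G hF hG =>
    (cfc_add (a := a) F G hF.continuousOn hG.continuousOn).symm
  have csub : ∀ (F G : ℝ → ℝ), Continuous F → Continuous G →
      cfc F a - cfc G a = cfc (fun x => F x - G x) a := fun F G hF hG =>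
    (cfc_sub F G a hF.continuousOn hG.continuousOn).symm
  have hsf : Continuous (fun x : ℝ => Real.sqrt x) := Real.continuous_sqrt
  have htf : Continuous (fun x : ℝ => Real.sqrt (1 - x)) :=
    Real.continuous_sqrt.comp (by continuity)
  have hgf : Continuous (fun x : ℝ => Real.sqrt x * Real.sqrt (1 - x)) := hsf.mul htf
  -- squares
  have hss : cfc (fun x : ℝ => Real.sqrt x) a * cfc (fun x : ℝ => Real.sqrt x) a = a := by
    rw [cmul _ _ hsf hsf,
      cfc_congr (g := fun x : ℝ => x) fun x hx => Real.mul_self_sqrt (hsp0 x hx)]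
    exact cfc_id' ℝ a
  have h1a : cfc (fun x : ℝ => 1 - x) a = 1 - a := by
    rw [← csub (fun _ => 1) (fun x => x) continuous_const continuous_id, cfc_const (1:ℝ) a,
      cfc_id' ℝ a]
    simp
  have htt : cfc (fun x : ℝ => Real.sqrt (1 - x)) a
      * cfc (fun x : ℝ => Real.sqrt (1 - x)) a = 1 - a := by
    rw [cmul _ _ htf htf,
      cfc_congr (g := fun x : ℝ => 1 - x) fun x hx => Real.mul_self_sqrt (by
        have := hsp1 x hx; linarith), h1a]
  have hgg : cfc (fun x : ℝ => Real.sqrt x * Real.sqrt (1 - x)) a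
      * cfc (fun x : ℝ => Real.sqrt x * Real.sqrt (1 - x)) a = a - a ^ 2 := by
    rw [cmul _ _ hgf hgf,
      cfc_congr (g := fun x : ℝ => x - x ^ 2) fun x hx => ?_,
      ← csub (fun x => x) (fun x => x ^ 2) continuous_id (by continuity), cfc_id' ℝ a,
      cfc_pow_id a 2]
    have h0 := hsp0 x hx
    have h1 := hsp1 x hx
    have e1 : Real.sqrt x * Real.sqrt x = x := Real.mul_self_sqrt h0
    have e2 : Real.sqrt (1 - x) * Real.sqrt (1 - x) = 1 - x := Real.mul_self_sqrt (by linarith)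
    linear_combination (Real.sqrt (1 - x) * Real.sqrt (1 - x)) * e1 + x * e2
  -- identify the sqrts
  have hs : CFC.sqrt a = cfc (fun x : ℝ => Real.sqrt x) a :=
    CFC.sqrt_unique hss (cfc_nonneg fun x _ => Real.sqrt_nonneg x)
  have ht : CFC.sqrt (1 - a) = cfc (fun x : ℝ => Real.sqrt (1 - x)) a :=
    CFC.sqrt_unique htt (cfc_nonneg fun x _ => Real.sqrt_nonneg _)
  have hg : CFC.sqrt (a - a ^ 2) = cfc (fun x : ℝ => Real.sqrt x * Real.sqrt (1 - x)) a :=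
    CFC.sqrt_unique hgg (cfc_nonneg fun x _ =>
      mul_nonneg (Real.sqrt_nonneg _) (Real.sqrt_nonneg _))
  -- abbreviations
  subst hP hU hP'
  rw [hs, ht, hg]
  set s := cfc (fun x : ℝ => Real.sqrt x) a with hsd
  set t := cfc (fun x : ℝ => Real.sqrt (1 - x)) a with htd
  set g := cfc (fun x : ℝ => Real.sqrt x * Real.sqrt (1 - x)) a with hgd
  have hstar_s : star s = s := (IsSelfAdjoint.of_nonneg (hsd ▸ cfc_nonneg
    fun x _ => Real.sqrt_nonneg x)).star_eq
  have hstar_t : star t = t := (IsSelfAdjoint.of_nonneg (htd ▸ cfc_nonneg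
    fun x _ => Real.sqrt_nonneg _)).star_eq
  have q1 : t * s = s * t := (cfc_commute_cfc _ _ a).eq
  have q2 : g = s * t := by
    rw [hgd, hsd, htd]
    exact cfc_mul _ _ a hsf.continuousOn htf.continuousOn
  have q3 : t * t = 1 - s * s := by rw [htt, hss]
  have q1' : ∀ x : A, t * (s * x) = s * (t * x) := fun x => by
    rw [← mul_assoc, q1, mul_assoc]
  have q3' : ∀ x : A, t * (t * x) = x - s * (s * x) := fun x => by
    rw [← mul_assoc, q3, sub_mul, one_mul, mul_assoc]
  have hass : a = s * s := hss.symm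
  clear_value s t g
  have hUH : (!![t, -s; s, t] : Matrix (Fin 2) (Fin 2) A)ᴴ = !![t, s; -s, t] := by
    ext i j
    fin_cases i <;> fin_cases j <;>
      simp [Matrix.conjTranspose_apply, hstar_s, hstar_t]
  rw [hUH, Matrix.mul_fin_two, Matrix.mul_fin_two]
  refine Matrix.ext fun i j => ?_
  fin_cases i <;> fin_cases j <;>
    simp only [Matrix.of_apply, Matrix.cons_val', Fin.zero_eta, Fin.mk_one, Fin.isValue,
      Matrix.cons_val_zero, Matrix.cons_val_one, Matrix.head_cons, Matrix.head_fin_const,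
      Matrix.empty_val', Matrix.cons_val_fin_one] <;>
    rw [hass] <;>
    simp only [q2, mul_sub, sub_mul, mul_add, add_mul, mul_one, one_mul, neg_mul, mul_neg,
      neg_neg, neg_sub, mul_assoc, q1, q1', q3, q3'] <;>
    abel1
end

section
/- In the universal model: let a, b : [−1,1] → M₂(ℂ) be defined by a(t) = diag(cos²(πt/2), 0) for t ∈ [−1,0] and a(t) = diag(1,0) for t ∈ [0,1]; b(t) = a(t) for t ∈ [−1,0] and b(t) = [[cos²(πt/2), cos(πt/2)sin(πt/2)],[cos(πt/2)sin(πt/2), sin²(πt/2)]] for t ∈ [0,1]. Then a and b are continuous, selfadjoint, 0 ≤ a(t), b(t) ≤ 1 for all t, b(t) is a projection for t ∈ [0,1], and (a(t)² − a(t))(a(t) − b(t)) = 0 and (b(t)² − b(t))(a(t) − b(t)) = 0 for all t ∈ [−1,1]. -/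
open Matrix Real
open scoped ComplexOrder

theorem stmt_14 (a b : ℝ → Matrix (Fin 2) (Fin 2) ℂ)
    (hadef : ∀ t, a t = if t ≤ 0 then !![((cos (π * t / 2) ^ 2 : ℝ) : ℂ), 0; 0, 0]
                        else !![(1 : ℂ), 0; 0, 0])
    (hbdef : ∀ t, b t = if t ≤ 0 then !![((cos (π * t / 2) ^ 2 : ℝ) : ℂ), 0; 0, 0]
                        else !![((cos (π * t / 2) ^ 2 : ℝ) : ℂ),
                                ((cos (π * t / 2) * sin (π * t / 2) : ℝ) : ℂ);
                                ((cos (π * t / 2) * sin (π * t / 2) : ℝ) : ℂ),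
                                ((sin (π * t / 2) ^ 2 : ℝ) : ℂ)]) :
    ContinuousOn a (Set.Icc (-1) 1) ∧ ContinuousOn b (Set.Icc (-1) 1) ∧
    (∀ t ∈ Set.Icc (-1 : ℝ) 1, (a t)ᴴ = a t ∧ (b t)ᴴ = b t) ∧
    (∀ t ∈ Set.Icc (-1 : ℝ) 1,
      (a t).PosSemidef ∧ (1 - a t).PosSemidef ∧ (b t).PosSemidef ∧ (1 - b t).PosSemidef) ∧
    (∀ t ∈ Set.Icc (0 : ℝ) 1, b t * b t = b t ∧ (b t)ᴴ = b t) ∧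
    (∀ t ∈ Set.Icc (-1 : ℝ) 1,
      (a t * a t - a t) * (a t - b t) = 0 ∧ (b t * b t - b t) * (a t - b t) = 0) := by
  have key : ∀ (M N : Matrix (Fin 2) (Fin 2) ℂ), M = Nᴴ * N → M.PosSemidef := by
    rintro M N rfl; exact posSemidef_conjTranspose_mul_self N
  have hcs : ∀ t : ℝ, ((cos (π * t / 2) : ℝ) : ℂ) ^ 2 + ((sin (π * t / 2) : ℝ) : ℂ) ^ 2 = 1 := by
    intro t
    rw [← Complex.ofReal_pow, ← Complex.ofReal_pow, ← Complex.ofReal_add, ← Complex.ofReal_one]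
    norm_num [cos_sq_add_sin_sq]
  -- closed forms
  have ha' : a = fun t => !![((cos (π * min t 0 / 2) ^ 2 : ℝ) : ℂ), 0; 0, 0] := by
    funext t
    rw [hadef t]
    split_ifs with h
    · rw [min_eq_left h]
    · rw [min_eq_right (le_of_not_ge h)]
      norm_num
  have hb' : b = fun t => !![((cos (π * t / 2) ^ 2 : ℝ) : ℂ),
      ((cos (π * t / 2) * sin (π * max t 0 / 2) : ℝ) : ℂ);
      ((cos (π * t / 2) * sin (π * max t 0 / 2) : ℝ) : ℂ),
      ((sin (π * max t 0 / 2) ^ 2 : ℝ) : ℂ)] := by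
    funext t
    rw [hbdef t]
    split_ifs with h
    · rw [max_eq_right h]; norm_num
    · rw [max_eq_left (le_of_not_ge h)]
  -- selfadjointness
  have herma : ∀ t, (a t)ᴴ = a t := by
    intro t
    rw [hadef t]
    split_ifs <;> (ext i j; fin_cases i <;> fin_cases j <;>
      simp [conjTranspose_apply, Complex.conj_ofReal,
        -Complex.ofReal_cos, -Complex.ofReal_sin, -Complex.ofReal_pow, -Complex.ofReal_mul])
  have hermb : ∀ t, (b t)ᴴ = b t := by
    intro t
    rw [hbdef t]
    split_ifs <;> (ext i j; fin_cases i <;> fin_cases j <;>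
      simp [conjTranspose_apply, Complex.conj_ofReal,
        -Complex.ofReal_cos, -Complex.ofReal_sin, -Complex.ofReal_pow, -Complex.ofReal_mul])
  -- projection fact for t > 0
  have hbproj : ∀ t : ℝ, ¬ t ≤ 0 → b t * b t = b t := by
    intro t h
    have h1 := hcs t
    rw [hbdef t, if_neg h]
    push_cast [-Complex.ofReal_cos, -Complex.ofReal_sin]
    set C : ℂ := ((cos (π * t / 2) : ℝ) : ℂ) with hC
    set S : ℂ := ((sin (π * t / 2) : ℝ) : ℂ) with hS
    ext i j
    fin_cases i <;> fin_cases j <;>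
      (simp [mul_apply, Fin.sum_univ_two]
       first
         | linear_combination h1 * (C * C)
         | linear_combination h1 * (C * S)
         | linear_combination h1 * (S * S))
  refine ⟨?_, ?_, ?_, ?_, ?_, ?_⟩
  · rw [ha']
    apply Continuous.continuousOn
    apply continuous_matrix
    intro i j
    fin_cases i <;> fin_cases j <;> simp <;> fun_prop
  · rw [hb']
    apply Continuous.continuousOn
    apply continuous_matrix
    intro i j
    fin_cases i <;> fin_cases j <;> simp <;> fun_prop
  · exact fun t _ => ⟨herma t, hermb t⟩
  · intro t _
    have h1 := hcs t
    refine ⟨?_, ?_, ?_, ?_⟩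
    · rw [hadef t]; split_ifs
      · exact key _ !![((cos (π*t/2):ℝ):ℂ),0;0,0] (by
          ext i j; fin_cases i <;> fin_cases j <;>
            (simp [mul_apply, Fin.sum_univ_two, Complex.conj_ofReal,
               -Complex.ofReal_cos, -Complex.ofReal_sin, -Complex.ofReal_pow, -Complex.ofReal_mul]
             <;> push_cast [-Complex.ofReal_cos, -Complex.ofReal_sin] <;> ring))
      · exact key _ !![1,0;0,0] (by
          ext i j; fin_cases i <;> fin_cases j <;> simp [mul_apply, Fin.sum_univ_two])
    · rw [hadef t]; split_ifs
      · exact key _ !![((sin (π*t/2):ℝ):ℂ),0;0,1] (by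
          ext i j; fin_cases i <;> fin_cases j <;>
            (simp [mul_apply, Fin.sum_univ_two, Matrix.one_apply, Complex.conj_ofReal,
               -Complex.ofReal_cos, -Complex.ofReal_sin, -Complex.ofReal_pow, -Complex.ofReal_mul]
             <;> push_cast [-Complex.ofReal_cos, -Complex.ofReal_sin]
             <;> first | linear_combination h1 | linear_combination - h1 | ring))
      · exact key _ !![0,0;0,1] (by
          ext i j; fin_cases i <;> fin_cases j <;>
            simp [mul_apply, Fin.sum_univ_two, Matrix.one_apply])
    · rw [hbdef t]; split_ifs
      · exact key _ !![((cos (π*t/2):ℝ):ℂ),0;0,0] (by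
          ext i j; fin_cases i <;> fin_cases j <;>
            (simp [mul_apply, Fin.sum_univ_two, Complex.conj_ofReal,
               -Complex.ofReal_cos, -Complex.ofReal_sin, -Complex.ofReal_pow, -Complex.ofReal_mul]
             <;> push_cast [-Complex.ofReal_cos, -Complex.ofReal_sin] <;> ring))
      · exact key _ !![((cos (π*t/2):ℝ):ℂ),((sin (π*t/2):ℝ):ℂ);0,0] (by
          ext i j; fin_cases i <;> fin_cases j <;>
            (simp [mul_apply, Fin.sum_univ_two, Complex.conj_ofReal,
               -Complex.ofReal_cos, -Complex.ofReal_sin, -Complex.ofReal_pow, -Complex.ofReal_mul]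
             <;> push_cast [-Complex.ofReal_cos, -Complex.ofReal_sin] <;> ring))
    · rw [hbdef t]; split_ifs
      · exact key _ !![((sin (π*t/2):ℝ):ℂ),0;0,1] (by
          ext i j; fin_cases i <;> fin_cases j <;>
            (simp [mul_apply, Fin.sum_univ_two, Matrix.one_apply, Complex.conj_ofReal,
               -Complex.ofReal_cos, -Complex.ofReal_sin, -Complex.ofReal_pow, -Complex.ofReal_mul]
             <;> push_cast [-Complex.ofReal_cos, -Complex.ofReal_sin]
             <;> first | linear_combination h1 | linear_combination - h1 | ring))
      · exact key _ !![((sin (π*t/2):ℝ):ℂ),-((cos (π*t/2):ℝ):ℂ);0,0] (by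
          ext i j; fin_cases i <;> fin_cases j <;>
            (simp [mul_apply, Fin.sum_univ_two, Matrix.one_apply, Complex.conj_ofReal,
               -Complex.ofReal_cos, -Complex.ofReal_sin, -Complex.ofReal_pow, -Complex.ofReal_mul]
             <;> push_cast [-Complex.ofReal_cos, -Complex.ofReal_sin]
             <;> first | linear_combination h1 | linear_combination - h1 | ring))
  · intro t ht
    refine ⟨?_, hermb t⟩
    by_cases h : t ≤ 0
    · have ht0 : t = 0 := le_antisymm h ht.1
      subst ht0
      rw [hbdef 0, if_pos le_rfl]
      ext i j; fin_cases i <;> fin_cases j <;> simp [mul_apply, Fin.sum_univ_two]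
    · exact hbproj t h
  · intro t _
    by_cases h : t ≤ 0
    · have hab : a t = b t := by rw [hadef t, hbdef t, if_pos h, if_pos h]
      rw [hab, sub_self]
      exact ⟨mul_zero _, mul_zero _⟩
    · constructor
      · have haa : a t * a t = a t := by
          rw [hadef t, if_neg h]
          ext i j; fin_cases i <;> fin_cases j <;> simp [mul_apply, Fin.sum_univ_two]
        rw [haa, sub_self, zero_mul]
      · rw [hbproj t h, sub_self, zero_mul]
end
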